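/- arXiv:1603.04788 — 4 statements merged into one kernel-verified Lean document; each statement's English description precedes it below -/
import Mathlib

section
/- The set function φ_{𝒫'} on subsets of 𝒫 is submodular: for all 𝒮₁, 𝒮₂ ⊆ 𝒫, φ_{𝒫'}(𝒮₁ ∪ 𝒮₂) ≤ φ_{𝒫'}(𝒮₁) + φ_{𝒫'}(𝒮₂) − φ_{𝒫'}(𝒮₁ ∩ 𝒮₂). -/
/-! Take minimizers `𝒯₁, 𝒯₂ ⊆ 𝒫'` for `𝒮₁, 𝒮₂` and compare with the candidates `𝒯₁ ∪ 𝒯₂` for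
`𝒮₁ ∪ 𝒮₂` and `𝒯₁ ∩ 𝒯₂` for `𝒮₁ ∩ 𝒮₂`. Because parts of a partition are disjoint, unions and
intersections of families of parts correspond to unions and intersections of their point sets, and
for point sets `|(A ∪ B) △ (C ∪ D)| + |(A ∩ B) △ (C ∩ D)| ≤ |A △ C| + |B △ D|`. -/

open Finset symmDiff

variable {V : Type*}

/-- `𝒜` is a partition of the finite set `V`: parts are nonempty, pairwise disjoint,
and their union is all of `V`. -/
def IsPartition [DecidableEq V] [Fintype V] (𝒜 : Finset (Finset V)) : Prop :=
  (∀ P ∈ 𝒜, P.Nonempty) ∧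
  (∀ P ∈ 𝒜, ∀ Q ∈ 𝒜, P ≠ Q → Disjoint P Q) ∧
  𝒜.biUnion id = Finset.univ

/-- `φ(𝒮, 𝒮') = |U_𝒮 △ U_𝒮'|`. -/
def phi [DecidableEq V] (𝒮 𝒮' : Finset (Finset V)) : ℕ :=
  ((𝒮.biUnion id) ∆ (𝒮'.biUnion id)).card

/-- `φ_{𝒫'}(𝒮) = min_{𝒮' ⊆ 𝒫'} φ(𝒮, 𝒮')` (here `ℬ` plays the role of `𝒫'`). -/
def phiMin [DecidableEq V] (ℬ : Finset (Finset V)) (𝒮 : Finset (Finset V)) : ℕ :=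
  ℬ.powerset.inf' (Finset.powerset_nonempty ℬ) (fun 𝒮' => phi 𝒮 𝒮')

namespace Finset

variable {α ι : Type*} [DecidableEq α]

theorem card_symmDiff_union_add_card_symmDiff_inter_le (A B C D : Finset α) :
    #((A ∪ B) ∆ (C ∪ D)) + #((A ∩ B) ∆ (C ∩ D)) ≤ #(A ∆ C) + #(B ∆ D) := by
  have hunion : (A ∪ B) ∆ (C ∪ D) ∪ (A ∩ B) ∆ (C ∩ D) ⊆ A ∆ C ∪ B ∆ D := by
    intro v
    simp only [mem_union, mem_inter, mem_symmDiff]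
    tauto
  -- a point in both differences lies in `A ∪ B` but not `C ∩ D`, or vice versa, hence in `A ∩ B`
  -- and outside `C ∪ D`, or vice versa
  have hinter : (A ∪ B) ∆ (C ∪ D) ∩ (A ∩ B) ∆ (C ∩ D) ⊆ A ∆ C ∩ B ∆ D := by
    intro v
    simp only [mem_union, mem_inter, mem_symmDiff]
    tauto
  calc #((A ∪ B) ∆ (C ∪ D)) + #((A ∩ B) ∆ (C ∩ D))
      = #((A ∪ B) ∆ (C ∪ D) ∪ (A ∩ B) ∆ (C ∩ D)) + #((A ∪ B) ∆ (C ∪ D) ∩ (A ∩ B) ∆ (C ∩ D)) :=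
        (card_union_add_card_inter _ _).symm
    _ ≤ #(A ∆ C ∪ B ∆ D) + #(A ∆ C ∩ B ∆ D) := by gcongr
    _ = #(A ∆ C) + #(B ∆ D) := card_union_add_card_inter _ _

theorem inter_biUnion_of_pairwiseDisjoint [DecidableEq ι] {s t : Finset ι} {f : ι → Finset α}
    (h : (↑(s ∪ t) : Set ι).PairwiseDisjoint f) :
    (s ∩ t).biUnion f = s.biUnion f ∩ t.biUnion f := by
  refine Subset.antisymm (subset_inter (biUnion_subset_biUnion_of_subset_left _ inter_subset_left)
    (biUnion_subset_biUnion_of_subset_left _ inter_subset_right)) ?_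
  intro v hv
  obtain ⟨⟨i, hi, hvi⟩, ⟨j, hj, hvj⟩⟩ := by simpa only [mem_inter, mem_biUnion] using hv
  have hij : i = j := h.elim (by simp [hi]) (by simp [hj]) (not_disjoint_iff.2 ⟨v, hvi, hvj⟩)
  subst hij
  exact mem_biUnion.2 ⟨i, mem_inter.2 ⟨hi, hj⟩, hvi⟩

end Finset

section

variable [DecidableEq V]

theorem IsPartition.pairwiseDisjoint [Fintype V] {𝒜 : Finset (Finset V)} (h𝒜 : IsPartition 𝒜) :
    (𝒜 : Set (Finset V)).PairwiseDisjoint id :=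
  fun P hP Q hQ hPQ => h𝒜.2.1 P hP Q hQ hPQ

theorem pairwiseDisjoint_union_of_subset {𝒜 𝒮₁ 𝒮₂ : Finset (Finset V)}
    (h𝒜 : (𝒜 : Set (Finset V)).PairwiseDisjoint id) (h₁ : 𝒮₁ ⊆ 𝒜) (h₂ : 𝒮₂ ⊆ 𝒜) :
    (↑(𝒮₁ ∪ 𝒮₂) : Set (Finset V)).PairwiseDisjoint id :=
  h𝒜.subset (coe_subset.2 (union_subset h₁ h₂))

theorem phi_union_add_phi_inter_le {𝒮₁ 𝒮₂ 𝒯₁ 𝒯₂ : Finset (Finset V)}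
    (h𝒮 : (↑(𝒮₁ ∪ 𝒮₂) : Set (Finset V)).PairwiseDisjoint id)
    (h𝒯 : (↑(𝒯₁ ∪ 𝒯₂) : Set (Finset V)).PairwiseDisjoint id) :
    phi (𝒮₁ ∪ 𝒮₂) (𝒯₁ ∪ 𝒯₂) + phi (𝒮₁ ∩ 𝒮₂) (𝒯₁ ∩ 𝒯₂) ≤ phi 𝒮₁ 𝒯₁ + phi 𝒮₂ 𝒯₂ := by
  unfold phi
  rw [union_biUnion, union_biUnion, inter_biUnion_of_pairwiseDisjoint h𝒮,
    inter_biUnion_of_pairwiseDisjoint h𝒯]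
  exact card_symmDiff_union_add_card_symmDiff_inter_le _ _ _ _

theorem phiMin_le_phi {ℬ 𝒮 𝒯 : Finset (Finset V)} (h𝒯 : 𝒯 ⊆ ℬ) : phiMin ℬ 𝒮 ≤ phi 𝒮 𝒯 :=
  inf'_le _ (mem_powerset.2 h𝒯)

theorem exists_phiMin_eq_phi (ℬ 𝒮 : Finset (Finset V)) : ∃ 𝒯 ⊆ ℬ, phiMin ℬ 𝒮 = phi 𝒮 𝒯 := by
  obtain ⟨𝒯, h𝒯, heq⟩ := exists_mem_eq_inf' (powerset_nonempty ℬ) (fun 𝒯 => phi 𝒮 𝒯)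
  exact ⟨𝒯, mem_powerset.1 h𝒯, heq⟩

theorem phiMin_union_add_phiMin_inter_le {ℬ 𝒮₁ 𝒮₂ : Finset (Finset V)}
    (hℬ : (ℬ : Set (Finset V)).PairwiseDisjoint id)
    (h𝒮 : (↑(𝒮₁ ∪ 𝒮₂) : Set (Finset V)).PairwiseDisjoint id) :
    phiMin ℬ (𝒮₁ ∪ 𝒮₂) + phiMin ℬ (𝒮₁ ∩ 𝒮₂) ≤ phiMin ℬ 𝒮₁ + phiMin ℬ 𝒮₂ := by
  obtain ⟨𝒯₁, h𝒯₁, hmin₁⟩ := exists_phiMin_eq_phi ℬ 𝒮₁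
  obtain ⟨𝒯₂, h𝒯₂, hmin₂⟩ := exists_phiMin_eq_phi ℬ 𝒮₂
  calc phiMin ℬ (𝒮₁ ∪ 𝒮₂) + phiMin ℬ (𝒮₁ ∩ 𝒮₂)
      ≤ phi (𝒮₁ ∪ 𝒮₂) (𝒯₁ ∪ 𝒯₂) + phi (𝒮₁ ∩ 𝒮₂) (𝒯₁ ∩ 𝒯₂) :=
        add_le_add (phiMin_le_phi (union_subset h𝒯₁ h𝒯₂))
          (phiMin_le_phi (inter_subset_left.trans h𝒯₁))
    _ ≤ phi 𝒮₁ 𝒯₁ + phi 𝒮₂ 𝒯₂ :=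
        phi_union_add_phi_inter_le h𝒮 (pairwiseDisjoint_union_of_subset hℬ h𝒯₁ h𝒯₂)
    _ = phiMin ℬ 𝒮₁ + phiMin ℬ 𝒮₂ := by rw [hmin₁, hmin₂]

end

/-- `φ_{𝒫'}` is submodular:
`φ_{𝒫'}(𝒮₁ ∪ 𝒮₂) ≤ φ_{𝒫'}(𝒮₁) + φ_{𝒫'}(𝒮₂) − φ_{𝒫'}(𝒮₁ ∩ 𝒮₂)`
(here `𝒜` plays the role of `𝒫` and `ℬ` the role of `𝒫'`). -/
theorem stmt4 [DecidableEq V] [Fintype V] (𝒜 ℬ : Finset (Finset V))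
    (hA : IsPartition 𝒜) (hB : IsPartition ℬ)
    (𝒮₁ 𝒮₂ : Finset (Finset V)) (hS₁ : 𝒮₁ ⊆ 𝒜) (hS₂ : 𝒮₂ ⊆ 𝒜) :
    (phiMin ℬ (𝒮₁ ∪ 𝒮₂) : ℝ) ≤
      (phiMin ℬ 𝒮₁ : ℝ) + (phiMin ℬ 𝒮₂ : ℝ) - (phiMin ℬ (𝒮₁ ∩ 𝒮₂) : ℝ) := by
  have h := phiMin_union_add_phiMin_inter_le hB.pairwiseDisjoint
    (pairwiseDisjoint_union_of_subset hA.pairwiseDisjoint hS₁ hS₂)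
  rw [le_sub_iff_add_le]
  exact_mod_cast h
end

section
/- The set function φ* need not be submodular: there exist a finite set V, partitions 𝒫 and 𝒫' of V, and subsets 𝒮₁, 𝒮₂ ⊆ 𝒫 such that φ*(𝒮₁ ∪ 𝒮₂) > φ*(𝒮₁) + φ*(𝒮₂) − φ*(𝒮₁ ∩ 𝒮₂). -/
open Finset symmDiff

variable {V : Type*}

/-- `φ*(𝒮) = 0` if `𝒮 ∈ {∅, 𝒫}`, and otherwise the minimum of `|U_𝒮 △ U_{𝒮'}|`
over all `𝒮'` with `∅ ≠ 𝒮' ⊊ 𝒫'` (here `𝒜` plays the role of `𝒫` and `ℬ` the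
role of `𝒫'`). -/
noncomputable def phiStar [DecidableEq V] (𝒜 ℬ : Finset (Finset V))
    (𝒮 : Finset (Finset V)) : ℕ :=
  if 𝒮 = ∅ ∨ 𝒮 = 𝒜 then 0
  else sInf {n : ℕ | ∃ 𝒮' : Finset (Finset V), 𝒮' ⊆ ℬ ∧ 𝒮' ≠ ∅ ∧ 𝒮' ≠ ℬ ∧ n = phi 𝒮 𝒮'}

/-! In `V = Fin 4` take `𝒫 = {{2, 3}, {1}, {0}}` and `𝒫' = {{1, 2, 3}, {0}}`, whose only nonempty
proper unions of parts are `{1, 2, 3}` and `{0}`. Then `φ*({{2, 3}}) = 1`, `φ*({{0}}) = 0` and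
`φ*(∅) = 0`, while the union `{0, 2, 3}` is at distance `2` from both `{1, 2, 3}` and `{0}`,
so `φ*({{2, 3}, {0}}) = 2 > 1 + 0 - 0`. -/

theorem Finset.subset_pair_iff_eq {α : Type*} [DecidableEq α] {s : Finset α} {a b : α} :
    s ⊆ {a, b} ↔ s = ∅ ∨ s = {a} ∨ s = {b} ∨ s = {a, b} := by
  rw [← coe_subset, coe_pair, Set.subset_pair_iff_eq]
  simp only [← coe_inj, coe_empty, coe_singleton, coe_pair]

section

variable [DecidableEq V]

theorem phiStar_empty (𝒜 ℬ : Finset (Finset V)) : phiStar 𝒜 ℬ ∅ = 0 :=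
  if_pos (Or.inl rfl)

theorem phiStar_pair (𝒜 𝒮 : Finset (Finset V)) {B₁ B₂ : Finset V} (hB : B₁ ≠ B₂)
    (h𝒮 : ¬(𝒮 = ∅ ∨ 𝒮 = 𝒜)) :
    phiStar 𝒜 {B₁, B₂} 𝒮 = min (phi 𝒮 {B₁}) (phi 𝒮 {B₂}) := by
  have hcandidates : {n : ℕ | ∃ 𝒮' : Finset (Finset V), 𝒮' ⊆ {B₁, B₂} ∧ 𝒮' ≠ ∅ ∧
      𝒮' ≠ {B₁, B₂} ∧ n = phi 𝒮 𝒮'} = {phi 𝒮 {B₁}, phi 𝒮 {B₂}} := by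
    have hsingleton_ne (B : Finset V) : ({B} : Finset (Finset V)) ≠ {B₁, B₂} :=
      fun h ↦ by simpa [← h] using card_pair hB
    ext n
    simp only [Set.mem_ofPred_eq, Set.mem_insert_iff, Set.mem_singleton_iff, subset_pair_iff_eq]
    constructor
    · rintro ⟨𝒮', h | rfl | rfl | rfl, hne, hproper, rfl⟩
      · exact absurd h hne
      · exact Or.inl rfl
      · exact Or.inr rfl
      · exact absurd rfl hproper
    · rintro (rfl | rfl)
      · exact ⟨{B₁}, Or.inr (Or.inl rfl), singleton_ne_empty _, hsingleton_ne _, rfl⟩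
      · exact ⟨{B₂}, Or.inr (Or.inr (Or.inl rfl)), singleton_ne_empty _, hsingleton_ne _, rfl⟩
  rw [phiStar, if_neg h𝒮, hcandidates, csInf_pair]

end

/-- `φ*` need not be submodular: there are a finite set `V`
(modelled as `Fin n`), partitions `𝒜, ℬ` of it, and `𝒮₁, 𝒮₂ ⊆ 𝒜` with
`φ*(𝒮₁ ∪ 𝒮₂) > φ*(𝒮₁) + φ*(𝒮₂) − φ*(𝒮₁ ∩ 𝒮₂)`. -/
theorem stmt12 :
    ∃ (n : ℕ) (𝒜 ℬ : Finset (Finset (Fin n))),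
      IsPartition 𝒜 ∧ IsPartition ℬ ∧
      ∃ (𝒮₁ 𝒮₂ : Finset (Finset (Fin n))), 𝒮₁ ⊆ 𝒜 ∧ 𝒮₂ ⊆ 𝒜 ∧
        (phiStar 𝒜 ℬ 𝒮₁ : ℤ) + (phiStar 𝒜 ℬ 𝒮₂ : ℤ) - (phiStar 𝒜 ℬ (𝒮₁ ∩ 𝒮₂) : ℤ)
          < (phiStar 𝒜 ℬ (𝒮₁ ∪ 𝒮₂) : ℤ) := by
  refine ⟨4, {{2, 3}, {1}, {0}}, {{1, 2, 3}, {0}}, ⟨by decide, by decide, by decide⟩,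
    ⟨by decide, by decide, by decide⟩, {{2, 3}}, {{0}}, by decide, by decide, ?_⟩
  have hB : ({1, 2, 3} : Finset (Fin 4)) ≠ {0} := by decide
  rw [phiStar_pair _ {{2, 3}} hB (by decide), phiStar_pair _ {{0}} hB (by decide),
    phiStar_pair _ ({{2, 3}} ∪ {{0}}) hB (by decide),
    show ({{2, 3}} ∩ {{0}} : Finset (Finset (Fin 4))) = ∅ by decide, phiStar_empty]
  decide
end

section
/- Fix distinct parts P_i', P_j' ∈ 𝒫'. For every subset 𝒮 ⊆ 𝒫, the minimum of |U_𝒮 △ U_{𝒮'}| over all 𝒮' ⊆ 𝒫' with P_i' ∈ 𝒮' and P_j' ∉ 𝒮' equals φ*_{i',j'}(𝒮) := |U_𝒮 ∩ P_j'| + |P_i'| − |U_𝒮 ∩ P_i'| + Σ_{P' ∈ 𝒫', P' ∉ {P_i', P_j'}} min{|U_𝒮 ∩ P'|, |P'| − |U_𝒮 ∩ P'|}, and this minimum is attained by 𝒮' := {P_i'} ∪ {P' ∈ 𝒫' \ {P_i', P_j'} : |U_𝒮 ∩ P'| > |P'|/2}. -/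
open Finset symmDiff

variable {V : Type*}

/-- `φ*_{i',j'}(𝒮) = |U_𝒮 ∩ P_j'| + |P_i'| − |U_𝒮 ∩ P_i'|
+ Σ_{P' ∈ 𝒫', P' ∉ {P_i', P_j'}} min{|U_𝒮 ∩ P'|, |P'| − |U_𝒮 ∩ P'|}`
(here `ℬ` plays the role of `𝒫'`). -/
def phiStarIJ [DecidableEq V] (ℬ : Finset (Finset V)) (Pi' Pj' : Finset V)
    (𝒮 : Finset (Finset V)) : ℤ :=
  ((𝒮.biUnion id ∩ Pj').card : ℤ) + (Pi'.card : ℤ) - ((𝒮.biUnion id ∩ Pi').card : ℤ) +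
    ∑ P' ∈ ℬ \ {Pi', Pj'},
      min (((𝒮.biUnion id ∩ P').card : ℤ))
        ((P'.card : ℤ) - ((𝒮.biUnion id ∩ P').card : ℤ))

/-!
Because `ℬ` partitions `V`, `|U_𝒮 △ U_𝒮'|` splits as a sum over the parts `P'` of `ℬ`: a part
in `𝒮'` contributes `|P'| − |U_𝒮 ∩ P'|`, a part outside contributes `|U_𝒮 ∩ P'|`. Apart from
`P_i'` (forced in) and `P_j'` (forced out) the parts can be chosen independently, so the minimum
takes the smaller of the two contributions for each of them, i.e. puts `P'` into `𝒮'` exactly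
when `U_𝒮` covers more than half of it.
-/

theorem ite_half_lt_eq_min (a b : ℕ) :
    (if (b : ℚ) / 2 < a then (b : ℤ) - a else (a : ℤ)) = min (a : ℤ) (b - a) := by
  split_ifs with h
  · have : b < 2 * a := by
      rw [div_lt_iff₀ two_pos] at h
      exact_mod_cast (mul_comm (a : ℚ) 2) ▸ h
    omega
  · have : 2 * a ≤ b := by
      rw [not_lt, le_div_iff₀ two_pos] at h
      exact_mod_cast (mul_comm (a : ℚ) 2) ▸ h
    omega

namespace IsPartition

variable [DecidableEq V] [Fintype V] {ℬ : Finset (Finset V)}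

theorem pairwiseDisjoint_s13 (hB : IsPartition ℬ) : (ℬ : Set (Finset V)).PairwiseDisjoint id :=
  fun P hP Q hQ hPQ => hB.2.1 P hP Q hQ hPQ

theorem card_eq_sum_card_inter (hB : IsPartition ℬ) (T : Finset V) :
    #T = ∑ P ∈ ℬ, #(T ∩ P) := by
  calc #T = #(T ∩ ℬ.biUnion id) := by rw [hB.2.2, inter_univ]
    _ = ∑ P ∈ ℬ, #(T ∩ P) := by
      rw [inter_biUnion, card_biUnion]
      · rfl
      · exact hB.pairwiseDisjoint_s13.mono fun P => inter_subset_right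

theorem biUnion_inter_of_notMem (hB : IsPartition ℬ) {𝒮' : Finset (Finset V)} (h𝒮' : 𝒮' ⊆ ℬ)
    {P : Finset V} (hP : P ∈ ℬ) (hP' : P ∉ 𝒮') : 𝒮'.biUnion id ∩ P = ∅ := by
  rw [← disjoint_iff_inter_eq_empty, disjoint_biUnion_left]
  exact fun Q hQ => hB.2.1 Q (h𝒮' hQ) P hP fun hQP => hP' (hQP ▸ hQ)

theorem phi_eq_sum (hB : IsPartition ℬ) (𝒮 : Finset (Finset V)) {𝒮' : Finset (Finset V)}
    (h𝒮' : 𝒮' ⊆ ℬ) :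
    (phi 𝒮 𝒮' : ℤ) = ∑ P ∈ ℬ,
      if P ∈ 𝒮' then (#P : ℤ) - #(𝒮.biUnion id ∩ P) else (#(𝒮.biUnion id ∩ P) : ℤ) := by
  rw [phi, hB.card_eq_sum_card_inter, Nat.cast_sum]
  refine sum_congr rfl fun P hP => ?_
  rw [show (𝒮.biUnion id ∆ 𝒮'.biUnion id) ∩ P = (𝒮.biUnion id ∩ P) ∆ (𝒮'.biUnion id ∩ P) from
    inf_symmDiff_distrib_right _ _ _]
  split_ifs with hP'
  · rw [inter_eq_right.2 (show P ⊆ _ from subset_biUnion_of_mem id hP'),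
      symmDiff_of_le inter_subset_right, card_sdiff_of_subset inter_subset_right,
      Nat.cast_sub (card_le_card inter_subset_right)]
  · rw [hB.biUnion_inter_of_notMem h𝒮' hP hP', ← bot_eq_empty, symmDiff_bot]

theorem phi_eq_of_mem_of_notMem (hB : IsPartition ℬ) (𝒮 : Finset (Finset V))
    {Pi' Pj' : Finset V} (hi : Pi' ∈ ℬ) (hj : Pj' ∈ ℬ) (hij : Pi' ≠ Pj')
    {𝒮' : Finset (Finset V)} (h𝒮' : 𝒮' ⊆ ℬ) (hi' : Pi' ∈ 𝒮') (hj' : Pj' ∉ 𝒮') :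
    (phi 𝒮 𝒮' : ℤ) = #(𝒮.biUnion id ∩ Pj') + #Pi' - #(𝒮.biUnion id ∩ Pi') +
      ∑ P ∈ ℬ \ {Pi', Pj'},
        if P ∈ 𝒮' then (#P : ℤ) - #(𝒮.biUnion id ∩ P) else (#(𝒮.biUnion id ∩ P) : ℤ) := by
  have hpair : {Pi', Pj'} ⊆ ℬ := insert_subset hi (singleton_subset_iff.2 hj)
  rw [hB.phi_eq_sum 𝒮 h𝒮', ← sum_sdiff hpair, sum_pair hij, if_pos hi', if_neg hj']
  ring

theorem phiStarIJ_le_phi (hB : IsPartition ℬ) (𝒮 : Finset (Finset V))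
    {Pi' Pj' : Finset V} (hi : Pi' ∈ ℬ) (hj : Pj' ∈ ℬ) (hij : Pi' ≠ Pj')
    {𝒮' : Finset (Finset V)} (h𝒮' : 𝒮' ⊆ ℬ) (hi' : Pi' ∈ 𝒮') (hj' : Pj' ∉ 𝒮') :
    phiStarIJ ℬ Pi' Pj' 𝒮 ≤ phi 𝒮 𝒮' := by
  rw [hB.phi_eq_of_mem_of_notMem 𝒮 hi hj hij h𝒮' hi' hj', phiStarIJ]
  gcongr with P
  split_ifs
  · exact min_le_right _ _
  · exact min_le_left _ _

end IsPartition

def majorityChoice [DecidableEq V] (ℬ 𝒮 : Finset (Finset V)) (Pi' Pj' : Finset V) :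
    Finset (Finset V) :=
  insert Pi' ((ℬ \ {Pi', Pj'}).filter fun P => (#P : ℚ) / 2 < #(𝒮.biUnion id ∩ P))

section majorityChoice

variable [DecidableEq V] {ℬ 𝒮 : Finset (Finset V)} {Pi' Pj' : Finset V}

theorem mem_majorityChoice_self : Pi' ∈ majorityChoice ℬ 𝒮 Pi' Pj' := mem_insert_self _ _

theorem majorityChoice_subset (hi : Pi' ∈ ℬ) : majorityChoice ℬ 𝒮 Pi' Pj' ⊆ ℬ :=
  insert_subset hi ((filter_subset _ _).trans sdiff_subset)

theorem notMem_majorityChoice (hij : Pi' ≠ Pj') : Pj' ∉ majorityChoice ℬ 𝒮 Pi' Pj' := by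
  simp [majorityChoice, hij.symm]

theorem IsPartition.phi_majorityChoice [Fintype V] (hB : IsPartition ℬ) (hi : Pi' ∈ ℬ)
    (hj : Pj' ∈ ℬ) (hij : Pi' ≠ Pj') :
    (phi 𝒮 (majorityChoice ℬ 𝒮 Pi' Pj') : ℤ) = phiStarIJ ℬ Pi' Pj' 𝒮 := by
  rw [hB.phi_eq_of_mem_of_notMem 𝒮 hi hj hij (majorityChoice_subset hi) mem_majorityChoice_self
    (notMem_majorityChoice hij), phiStarIJ]
  congr 1
  refine sum_congr rfl fun P hP => ?_
  have hPi : P ≠ Pi' := fun h => by simp [h] at hP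
  simp only [majorityChoice, mem_insert, hPi, false_or, mem_filter, hP, true_and]
  exact ite_half_lt_eq_min _ _

end majorityChoice

theorem stmt13_general [DecidableEq V] [Fintype V] (ℬ : Finset (Finset V))
    (hB : IsPartition ℬ)
    (Pi' Pj' : Finset V) (hi : Pi' ∈ ℬ) (hj : Pj' ∈ ℬ) (hij : Pi' ≠ Pj')
    (𝒮 : Finset (Finset V)) :
    (∀ 𝒮' ⊆ ℬ, Pi' ∈ 𝒮' → Pj' ∉ 𝒮' →
        phiStarIJ ℬ Pi' Pj' 𝒮 ≤ (phi 𝒮 𝒮' : ℤ)) ∧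
    (∃ 𝒮'₀ : Finset (Finset V),
      𝒮'₀ = insert Pi' ((ℬ \ {Pi', Pj'}).filter fun P' =>
          ((P'.card : ℚ) / 2 < ((𝒮.biUnion id ∩ P').card : ℚ))) ∧
      𝒮'₀ ⊆ ℬ ∧ Pi' ∈ 𝒮'₀ ∧ Pj' ∉ 𝒮'₀ ∧
        (phi 𝒮 𝒮'₀ : ℤ) = phiStarIJ ℬ Pi' Pj' 𝒮) :=
  ⟨fun _ h𝒮' hi' hj' => hB.phiStarIJ_le_phi 𝒮 hi hj hij h𝒮' hi' hj',
    majorityChoice ℬ 𝒮 Pi' Pj', rfl, majorityChoice_subset hi, mem_majorityChoice_self,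
    notMem_majorityChoice hij, hB.phi_majorityChoice hi hj hij⟩

/-- for distinct `P_i', P_j' ∈ 𝒫'` and `𝒮 ⊆ 𝒫`, the minimum of
`|U_𝒮 △ U_{𝒮'}|` over all `𝒮' ⊆ 𝒫'` with `P_i' ∈ 𝒮'` and `P_j' ∉ 𝒮'` equals
`φ*_{i',j'}(𝒮)`, and it is attained by
`𝒮' = {P_i'} ∪ {P' ∈ 𝒫' \ {P_i', P_j'} : |U_𝒮 ∩ P'| > |P'|/2}`
(here `𝒜` plays the role of `𝒫` and `ℬ` the role of `𝒫'`). -/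
theorem stmt13 [DecidableEq V] [Fintype V] (𝒜 ℬ : Finset (Finset V))
    (hA : IsPartition 𝒜) (hB : IsPartition ℬ)
    (Pi' Pj' : Finset V) (hi : Pi' ∈ ℬ) (hj : Pj' ∈ ℬ) (hij : Pi' ≠ Pj')
    (𝒮 : Finset (Finset V)) (hS : 𝒮 ⊆ 𝒜) :
    (∀ 𝒮' ⊆ ℬ, Pi' ∈ 𝒮' → Pj' ∉ 𝒮' →
        phiStarIJ ℬ Pi' Pj' 𝒮 ≤ (phi 𝒮 𝒮' : ℤ)) ∧
    (∃ 𝒮'₀ : Finset (Finset V),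
      𝒮'₀ = insert Pi' ((ℬ \ {Pi', Pj'}).filter fun P' =>
          ((P'.card : ℚ) / 2 < ((𝒮.biUnion id ∩ P').card : ℚ))) ∧
      𝒮'₀ ⊆ ℬ ∧ Pi' ∈ 𝒮'₀ ∧ Pj' ∉ 𝒮'₀ ∧
        (phi 𝒮 𝒮'₀ : ℤ) = phiStarIJ ℬ Pi' Pj' 𝒮) :=
  stmt13_general ℬ hB Pi' Pj' hi hj hij 𝒮
end

section
/- Fix distinct parts P_i', P_j' ∈ 𝒫'. The set function φ*_{i',j'} on subsets of 𝒫 is submodular. -/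
open Finset symmDiff

variable {V : Type*}

/-! `𝒮 ↦ U_𝒮` turns unions into unions and, because the parts of `𝒫` are disjoint,
intersections into intersections. So `φ*_{i',j'}` is the pull-back of a set function of
`U ⊆ V`, which is submodular on the lattice of all subsets: `|U ∩ P'|` is modular in `U`,
and `min {a, |P'| - a}` is concave in `a`. -/

section
variable [DecidableEq V]

def phiStarOfSet (ℬ : Finset (Finset V)) (Pi' Pj' U : Finset V) : ℤ :=
  (#(U ∩ Pj') : ℤ) + #Pi' - #(U ∩ Pi') +
    ∑ P' ∈ ℬ \ {Pi', Pj'}, min (#(U ∩ P') : ℤ) (#P' - #(U ∩ P'))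

theorem phiStarIJ_eq_phiStarOfSet (ℬ 𝒮 : Finset (Finset V)) (Pi' Pj' : Finset V) :
    phiStarIJ ℬ Pi' Pj' 𝒮 = phiStarOfSet ℬ Pi' Pj' (𝒮.biUnion id) :=
  rfl

theorem Finset.biUnion_inter_of_pairwiseDisjoint {𝒜 𝒮₁ 𝒮₂ : Finset (Finset V)}
    (h𝒜 : (𝒜 : Set (Finset V)).PairwiseDisjoint id) (h₁ : 𝒮₁ ⊆ 𝒜) (h₂ : 𝒮₂ ⊆ 𝒜) :
    (𝒮₁ ∩ 𝒮₂).biUnion id = 𝒮₁.biUnion id ∩ 𝒮₂.biUnion id := by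
  refine Subset.antisymm (subset_inter (biUnion_subset_biUnion_of_subset_left _ inter_subset_left)
    (biUnion_subset_biUnion_of_subset_left _ inter_subset_right)) fun x hx => ?_
  simp only [mem_inter, mem_biUnion, id] at hx ⊢
  obtain ⟨⟨P, hP, hxP⟩, ⟨Q, hQ, hxQ⟩⟩ := hx
  obtain rfl : P = Q := h𝒜.elim (h₁ hP) (h₂ hQ) (not_disjoint_iff.mpr ⟨x, hxP, hxQ⟩)
  exact ⟨P, ⟨hP, hQ⟩, hxP⟩

theorem card_union_inter_add_card_inter_inter (U₁ U₂ P : Finset V) :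
    #((U₁ ∪ U₂) ∩ P) + #(U₁ ∩ U₂ ∩ P) = #(U₁ ∩ P) + #(U₂ ∩ P) := by
  rw [union_inter_distrib_right, inter_inter_distrib_right, card_union_add_card_inter]

theorem min_card_inter_card_sub_submodular (U₁ U₂ P : Finset V) :
    min (#((U₁ ∪ U₂) ∩ P) : ℤ) (#P - #((U₁ ∪ U₂) ∩ P)) +
        min (#(U₁ ∩ U₂ ∩ P) : ℤ) (#P - #(U₁ ∩ U₂ ∩ P)) ≤
      min (#(U₁ ∩ P) : ℤ) (#P - #(U₁ ∩ P)) + min (#(U₂ ∩ P) : ℤ) (#P - #(U₂ ∩ P)) := by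
  have hmod := card_union_inter_add_card_inter_inter U₁ U₂ P
  have h₁ : #(U₁ ∩ U₂ ∩ P) ≤ #(U₁ ∩ P) := card_le_card (inter_subset_inter_right inter_subset_left)
  have h₂ : #(U₁ ∩ U₂ ∩ P) ≤ #(U₂ ∩ P) := card_le_card (inter_subset_inter_right inter_subset_right)
  omega

theorem phiStarOfSet_submodular (ℬ : Finset (Finset V)) (Pi' Pj' U₁ U₂ : Finset V) :
    phiStarOfSet ℬ Pi' Pj' (U₁ ∪ U₂) + phiStarOfSet ℬ Pi' Pj' (U₁ ∩ U₂) ≤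
      phiStarOfSet ℬ Pi' Pj' U₁ + phiStarOfSet ℬ Pi' Pj' U₂ := by
  have hsum := sum_le_sum fun P (_ : P ∈ ℬ \ {Pi', Pj'}) ↦
    min_card_inter_card_sub_submodular U₁ U₂ P
  have hj := card_union_inter_add_card_inter_inter U₁ U₂ Pj'
  have hi := card_union_inter_add_card_inter_inter U₁ U₂ Pi'
  simp only [sum_add_distrib] at hsum
  unfold phiStarOfSet
  omega

end

theorem stmt14_general [DecidableEq V] [Fintype V] (𝒜 ℬ : Finset (Finset V))
    (hA : IsPartition 𝒜)
    (Pi' Pj' : Finset V)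
    (𝒮₁ 𝒮₂ : Finset (Finset V)) (hS₁ : 𝒮₁ ⊆ 𝒜) (hS₂ : 𝒮₂ ⊆ 𝒜) :
    phiStarIJ ℬ Pi' Pj' (𝒮₁ ∪ 𝒮₂) ≤
      phiStarIJ ℬ Pi' Pj' 𝒮₁ + phiStarIJ ℬ Pi' Pj' 𝒮₂ -
        phiStarIJ ℬ Pi' Pj' (𝒮₁ ∩ 𝒮₂) := by
  have hinter := biUnion_inter_of_pairwiseDisjoint (fun P hP Q hQ ↦ hA.2.1 P hP Q hQ) hS₁ hS₂
  simp only [phiStarIJ_eq_phiStarOfSet, union_biUnion, hinter]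
  linarith [phiStarOfSet_submodular ℬ Pi' Pj' (𝒮₁.biUnion id) (𝒮₂.biUnion id)]

/-- for distinct `P_i', P_j' ∈ 𝒫'`, the set function `φ*_{i',j'}`
on subsets of `𝒫` is submodular (here `𝒜` plays the role of `𝒫` and `ℬ` the
role of `𝒫'`). -/
theorem stmt14 [DecidableEq V] [Fintype V] (𝒜 ℬ : Finset (Finset V))
    (hA : IsPartition 𝒜) (hB : IsPartition ℬ)
    (Pi' Pj' : Finset V) (hi : Pi' ∈ ℬ) (hj : Pj' ∈ ℬ) (hij : Pi' ≠ Pj')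
    (𝒮₁ 𝒮₂ : Finset (Finset V)) (hS₁ : 𝒮₁ ⊆ 𝒜) (hS₂ : 𝒮₂ ⊆ 𝒜) :
    phiStarIJ ℬ Pi' Pj' (𝒮₁ ∪ 𝒮₂) ≤
      phiStarIJ ℬ Pi' Pj' 𝒮₁ + phiStarIJ ℬ Pi' Pj' 𝒮₂ -
        phiStarIJ ℬ Pi' Pj' (𝒮₁ ∩ 𝒮₂) :=
  stmt14_general 𝒜 ℬ hA Pi' Pj' 𝒮₁ 𝒮₂ hS₁ hS₂
end
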